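/- arXiv:1008.2701 — 2 statements merged into one kernel-verified Lean document; each statement's English description precedes it below -/
import Mathlib

section
/- Let c > 0, n ∈ ℕ, and let f : (a,b) → ℝ be n-convex. Then f is strongly n-convex with modulus c (i.e. the function f(x) − c x^{n+1}/(n+1)! is n-convex) if and only if the pointwise derivative f^{(n+1)}(x), which exists Lebesgue-almost everywhere, satisfies f^{(n+1)}(x) ≥ c for Lebesgue-almost every x ∈ (a,b). -/
open Set Filter MeasureTheory

/-- Divided difference of `f` at the points `x 0, ..., x (m-1)`. -/
noncomputable def divDiff (f : ℝ → ℝ) {m : ℕ} (x : Fin m → ℝ) : ℝ :=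
  ∑ i, f (x i) / ∏ j ∈ Finset.univ.erase i, (x i - x j)

/-- `f` is `n`-convex on `(a,b)` in the sense of Popoviciu: all its `(n+2)`-point
divided differences at increasing points of `(a,b)` are nonnegative. -/
def PopoviciuConvexOn (n : ℕ) (a b : ℝ) (f : ℝ → ℝ) : Prop :=
  ∀ x : Fin (n + 2) → ℝ, StrictMono x → (∀ i, x i ∈ Set.Ioo a b) → 0 ≤ divDiff f x

/-- `F` is a chain of successive right derivatives of length `n` on `(a,b)`. -/
def IsRightDerivChainOn (F : ℕ → ℝ → ℝ) (n : ℕ) (a b : ℝ) : Prop :=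
  ∀ k < n, ∀ x ∈ Set.Ioo a b, HasDerivWithinAt (F k) (F (k + 1) x) (Set.Ici x) x

/-- `f` is `n`-convex on `(a,b)`: its right `n`-th derivative (obtained by `n`
successive right derivatives) exists at every point of `(a,b)` and is non-decreasing. -/
def NConvexOn (n : ℕ) (a b : ℝ) (f : ℝ → ℝ) : Prop :=
  ∃ F : ℕ → ℝ → ℝ, F 0 = f ∧ IsRightDerivChainOn F n a b ∧
    MonotoneOn (F n) (Set.Ioo a b)

/-!
Subtracting the chain of derivatives of `c x^{n+1}/(n+1)!` from the right-derivative chain of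
`f`, and using uniqueness of right derivatives, strong `n`-convexity of `f` becomes monotonicity
of `F n x - c x` on `(a,b)`. If that function is monotone, it is differentiable a.e. with
nonnegative derivative. Conversely, since `F n` is monotone, the integral of its a.e. derivative
over `[x,y]` is at most `F n y - F n x` (Lebesgue), so `F n y - F n x ≥ c (y - x)`.
-/

open Topology

namespace IsRightDerivChainOn

variable {F G : ℕ → ℝ → ℝ} {n : ℕ} {a b : ℝ}

theorem sub (hF : IsRightDerivChainOn F n a b) (hG : IsRightDerivChainOn G n a b) :
    IsRightDerivChainOn (fun k x => F k x - G k x) n a b :=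
  fun k hk x hx => (hF k hk x hx).sub (hG k hk x hx)

theorem eqOn (hF : IsRightDerivChainOn F n a b) (hG : IsRightDerivChainOn G n a b)
    (h₀ : EqOn (F 0) (G 0) (Ioo a b)) : ∀ k ≤ n, EqOn (F k) (G k) (Ioo a b) := by
  intro k
  induction k with
  | zero => exact fun _ => h₀
  | succ k ih =>
    intro hk x hx
    have hFG : F k =ᶠ[𝓝[Ici x] x] G k :=
      EventuallyEq.filter_mono
        (eventually_of_mem (isOpen_Ioo.mem_nhds hx) (ih (by omega))) nhdsWithin_le_nhds
    exact (uniqueDiffOn_Ici x x self_mem_Ici).eq_deriv _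
      ((hF k hk x hx).congr_of_eventuallyEq hFG.symm (ih (by omega) hx).symm) (hG k hk x hx)

theorem nConvexOn_iff (hF : IsRightDerivChainOn F n a b) :
    NConvexOn n a b (F 0) ↔ MonotoneOn (F n) (Ioo a b) := by
  refine ⟨fun ⟨G, hG₀, hG, hGmono⟩ => ?_, fun h => ⟨F, rfl, hF, h⟩⟩
  exact hGmono.congr (hG.eqOn hF (by rw [hG₀]; exact eqOn_refl _ _) n le_rfl)

end IsRightDerivChainOn

theorem hasDerivAt_mul_pow_div_factorial (c x : ℝ) (m : ℕ) :
    HasDerivAt (fun t => c * t ^ (m + 1) / (m + 1).factorial) (c * x ^ m / m.factorial) x := by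
  refine (((hasDerivAt_pow (m + 1) x).const_mul c).div_const
    ((m + 1).factorial : ℝ)).congr_deriv ?_
  rw [Nat.factorial_succ, Nat.add_sub_cancel]
  push_cast
  field_simp

theorem isRightDerivChainOn_mul_pow_div_factorial (c : ℝ) (n : ℕ) (a b : ℝ) :
    IsRightDerivChainOn (fun k x => c * x ^ (n + 1 - k) / (n + 1 - k).factorial) n a b := by
  intro k hk x _
  obtain ⟨m, rfl⟩ := Nat.exists_eq_add_of_lt hk
  have h := hasDerivAt_mul_pow_div_factorial c x (m + 1)
  beta_reduce
  rw [show k + m + 1 + 1 - k = m + 1 + 1 by omega, show k + m + 1 + 1 - (k + 1) = m + 1 by omega]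
  exact h.hasDerivWithinAt

namespace MonotoneOn

variable {φ : ℝ → ℝ} {s : Set ℝ} {c : ℝ}

theorem ae_exists_hasDerivAt_ge (hs : IsOpen s) (h : MonotoneOn (fun x => φ x - c * x) s) :
    ∀ᵐ x, x ∈ s → ∃ d, c ≤ d ∧ HasDerivAt φ d x := by
  filter_upwards [h.ae_differentiableWithinAt_of_mem] with x hdiff hx
  have hψ := ((hdiff hx).differentiableAt (hs.mem_nhds hx)).hasDerivAt
  have hψ_nonneg : 0 ≤ deriv (fun x => φ x - c * x) x := by
    rw [← derivWithin_of_isOpen hs hx]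
    exact h.derivWithin_nonneg
  refine ⟨_ + c, by linarith, ?_⟩
  simpa using hψ.fun_add ((hasDerivAt_id x).const_mul c)

theorem sub_mul_of_ae_hasDerivAt_ge (hs : s.OrdConnected) (hφ : MonotoneOn φ s)
    (h : ∀ᵐ x, x ∈ s → ∃ d, c ≤ d ∧ HasDerivAt φ d x) :
    MonotoneOn (fun x => φ x - c * x) s := by
  intro x hx y hy hxy
  have hxy_sub : Icc x y ⊆ s := hs.out hx hy
  have hφxy : MonotoneOn φ (uIcc x y) := hφ.mono (uIcc_of_le hxy ▸ hxy_sub)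
  have hderiv : ∀ᵐ t ∂volume.restrict (Icc x y), c ≤ deriv φ t := by
    rw [ae_restrict_iff' measurableSet_Icc]
    filter_upwards [h] with t ht htxy
    obtain ⟨d, hcd, hd⟩ := ht (hxy_sub htxy)
    exact hd.deriv ▸ hcd
  have hint := hφxy.intervalIntegral_deriv_mem_uIcc
  rw [uIcc_of_le (sub_nonneg.2 (hφ hx hy hxy))] at hint
  have : c * (y - x) ≤ φ y - φ x := calc
    c * (y - x) = ∫ _ in x..y, c := by simp [mul_comm]
    _ ≤ ∫ t in x..y, deriv φ t := intervalIntegral.integral_mono_ae_restrict hxy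
      intervalIntegrable_const hφxy.intervalIntegrable_deriv hderiv
    _ ≤ φ y - φ x := hint.2
  linarith

end MonotoneOn

theorem strongly_nconvex_iff_ae_deriv_general (n : ℕ) (a b c : ℝ)
    (f : ℝ → ℝ) (F : ℕ → ℝ → ℝ) (hF0 : F 0 = f)
    (hchain : IsRightDerivChainOn F n a b)
    (hmono : MonotoneOn (F n) (Set.Ioo a b)) :
    NConvexOn n a b (fun x => f x - c * x ^ (n + 1) / (Nat.factorial (n + 1))) ↔
      ∀ᵐ x ∂MeasureTheory.volume, x ∈ Set.Ioo a b →
        ∃ d : ℝ, c ≤ d ∧ HasDerivAt (F n) d x := by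
  have hG := hchain.sub (isRightDerivChainOn_mul_pow_div_factorial c n a b)
  calc NConvexOn n a b (fun x => f x - c * x ^ (n + 1) / (Nat.factorial (n + 1)))
      ↔ MonotoneOn (fun x => F n x - c * x) (Ioo a b) := by
        simpa [hF0] using hG.nConvexOn_iff
    _ ↔ _ := ⟨MonotoneOn.ae_exists_hasDerivAt_ge isOpen_Ioo,
        hmono.sub_mul_of_ae_hasDerivAt_ge ordConnected_Ioo⟩

/-- Let `f` be `n`-convex on `(a,b)`, with right-derivative chain `F` (so `F n` is the
non-decreasing right `n`-th derivative of `f`). Then `f` is strongly `n`-convex with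
modulus `c > 0` (i.e. `x ↦ f(x) - c x^{n+1}/(n+1)!` is `n`-convex) iff the pointwise
derivative `f⁽ⁿ⁺¹⁾` exists a.e. on `(a,b)` and satisfies `f⁽ⁿ⁺¹⁾(x) ≥ c` a.e. -/
theorem strongly_nconvex_iff_ae_deriv (n : ℕ) (a b c : ℝ) (hab : a < b)
    (hc : 0 < c) (f : ℝ → ℝ) (F : ℕ → ℝ → ℝ) (hF0 : F 0 = f)
    (hchain : IsRightDerivChainOn F n a b)
    (hmono : MonotoneOn (F n) (Set.Ioo a b)) :
    NConvexOn n a b (fun x => f x - c * x ^ (n + 1) / (Nat.factorial (n + 1))) ↔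
      ∀ᵐ x ∂MeasureTheory.volume, x ∈ Set.Ioo a b →
        ∃ d : ℝ, c ≤ d ∧ HasDerivAt (F n) d x :=
  strongly_nconvex_iff_ae_deriv_general n a b c f F hF0 hchain hmono
end

section
/- Let n ∈ ℕ, c > 0, and let f : (a,b) → ℝ be (n+1)-times differentiable. Then f is strongly n-convex with modulus c if and only if f^{(n+1)}(x) ≥ c for all x ∈ (a,b). -/
/-! Subtracting `c x^(n+1-k)/(n+1-k)!` from `F k` gives a chain of derivatives of
`g = f - c x^(n+1)/(n+1)!` ending in `F (n+1) - c`. Right derivatives are unique, so every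
right-derivative chain of `g` agrees with this one on `(a,b)`; hence `n`-convexity of `g` is
monotonicity of `g⁽ⁿ⁾` on the open interval, i.e. `F (n+1) - c ≥ 0` there. -/

open Set Filter MeasureTheory

open Topology

theorem IsRightDerivChainOn.eqOn_s19 {F G : ℕ → ℝ → ℝ} {n : ℕ} {a b : ℝ}
    (hF : IsRightDerivChainOn F n a b) (hG : IsRightDerivChainOn G n a b)
    (h0 : EqOn (F 0) (G 0) (Ioo a b)) : ∀ k ≤ n, EqOn (F k) (G k) (Ioo a b) := by
  intro k hk
  induction k with
  | zero => exact h0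
  | succ k ih =>
    intro y hy
    have hFG : F k =ᶠ[𝓝[Ici y] y] G k :=
      nhdsWithin_le_nhds (eventually_of_mem (isOpen_Ioo.mem_nhds hy) (ih (by omega)))
    exact (uniqueDiffWithinAt_Ici y).eq_deriv _
      ((hF k (by omega) y hy).congr_of_eventuallyEq hFG.symm (ih (by omega) hy).symm)
      (hG k (by omega) y hy)

theorem nConvexOn_iff_monotoneOn {G : ℕ → ℝ → ℝ} {n : ℕ} {a b : ℝ}
    (hG : IsRightDerivChainOn G n a b) :
    NConvexOn n a b (G 0) ↔ MonotoneOn (G n) (Ioo a b) := by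
  refine ⟨fun ⟨F, hF0, hF, hmono⟩ => ?_, fun hmono => ⟨G, rfl, hG, hmono⟩⟩
  exact hmono.congr (hF.eqOn_s19 hG (by rw [hF0]; exact eqOn_refl _ _) n le_rfl)

theorem monotoneOn_iff_forall_nonneg_of_hasDerivAt {D : Set ℝ} (hD : Convex ℝ D)
    (hDo : IsOpen D) {g g' : ℝ → ℝ} (hg : ∀ x ∈ D, HasDerivAt g (g' x) x) :
    MonotoneOn g D ↔ ∀ x ∈ D, 0 ≤ g' x := by
  refine ⟨fun hmono x hx => ?_, fun hnonneg => ?_⟩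
  · exact (hg x hx).hasDerivWithinAt.nonneg_of_monotoneOn (hDo.preperfect x hx) hmono
  · exact monotoneOn_of_hasDerivWithinAt_nonneg hD
      (fun x hx => (hg x hx).continuousAt.continuousWithinAt)
      (fun x hx => (hg x (interior_subset hx)).hasDerivWithinAt)
      (fun x hx => hnonneg x (interior_subset hx))

theorem hasDerivAt_pow_succ_div_factorial (m : ℕ) (x : ℝ) :
    HasDerivAt (fun y : ℝ => y ^ (m + 1) / (m + 1).factorial) (x ^ m / m.factorial) x := by
  refine ((hasDerivAt_pow (m + 1) x).div_const ((m + 1).factorial : ℝ)).congr_deriv ?_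
  rw [Nat.add_sub_cancel, Nat.factorial_succ, Nat.cast_mul]
  field_simp

theorem hasDerivAt_pow_sub_div_factorial {N k : ℕ} (hk : k < N) (x : ℝ) :
    HasDerivAt (fun y : ℝ => y ^ (N - k) / (N - k).factorial)
      (x ^ (N - (k + 1)) / (N - (k + 1)).factorial) x := by
  obtain ⟨m, hm⟩ : ∃ m, N - k = m + 1 := ⟨N - k - 1, by omega⟩
  rw [hm, show N - (k + 1) = m by omega]
  exact hasDerivAt_pow_succ_div_factorial m x

theorem strongly_nconvex_iff_deriv_general (n : ℕ) (a b c : ℝ)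
    (f : ℝ → ℝ) (F : ℕ → ℝ → ℝ) (hF0 : F 0 = f)
    (hchain : ∀ k < n + 1, ∀ x ∈ Set.Ioo a b, HasDerivAt (F k) (F (k + 1) x) x) :
    NConvexOn n a b (fun x => f x - c * x ^ (n + 1) / (Nat.factorial (n + 1))) ↔
      ∀ x ∈ Set.Ioo a b, c ≤ F (n + 1) x := by
  set G : ℕ → ℝ → ℝ := fun k x => F k x - c * (x ^ (n + 1 - k) / (n + 1 - k).factorial)
  have hG : ∀ k < n + 1, ∀ x ∈ Ioo a b, HasDerivAt (G k) (G (k + 1) x) x := fun k hk x hx =>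
    (hchain k hk x hx).sub ((hasDerivAt_pow_sub_div_factorial hk x).const_mul c)
  have hG0 : G 0 = fun x => f x - c * x ^ (n + 1) / (n + 1).factorial := by
    funext x; simp [G, hF0, mul_div_assoc]
  have hGn : ∀ x, G (n + 1) x = F (n + 1) x - c := fun x => by simp [G]
  rw [← hG0, nConvexOn_iff_monotoneOn fun k hk x hx => (hG k (by omega) x hx).hasDerivWithinAt,
    monotoneOn_iff_forall_nonneg_of_hasDerivAt (convex_Ioo a b) isOpen_Ioo (hG n n.lt_succ_self)]
  simp only [hGn, sub_nonneg]

/-- Let `f` be `(n+1)`-times differentiable on `(a,b)` (with derivative chain `F`, so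
`F (n+1)` is `f⁽ⁿ⁺¹⁾`). Then `f` is strongly `n`-convex with modulus `c > 0` (i.e.
`x ↦ f(x) - c x^{n+1}/(n+1)!` is `n`-convex) iff `f⁽ⁿ⁺¹⁾(x) ≥ c` for all
`x ∈ (a,b)`. -/
theorem strongly_nconvex_iff_deriv (n : ℕ) (a b c : ℝ) (hab : a < b)
    (hc : 0 < c) (f : ℝ → ℝ) (F : ℕ → ℝ → ℝ) (hF0 : F 0 = f)
    (hchain : ∀ k < n + 1, ∀ x ∈ Set.Ioo a b, HasDerivAt (F k) (F (k + 1) x) x) :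
    NConvexOn n a b (fun x => f x - c * x ^ (n + 1) / (Nat.factorial (n + 1))) ↔
      ∀ x ∈ Set.Ioo a b, c ≤ F (n + 1) x :=
  strongly_nconvex_iff_deriv_general n a b c f F hF0 hchain
end
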